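/- arXiv:0912.3136 — 3 statements merged into one kernel-verified Lean document; each statement's English description precedes it below -/
import Mathlib

section
/- If S₁ is a geodetic set of G and S₂ is a geodetic set of H, then S₁ × S₂ is a geodetic set of G ⊠ H. -/
open SimpleGraph

/-- The strong product of two simple graphs. -/
def strongProd {α β : Type*} (G : SimpleGraph α) (H : SimpleGraph β) :
    SimpleGraph (α × β) where
  Adj x y := x ≠ y ∧ (x.1 = y.1 ∨ G.Adj x.1 y.1) ∧ (x.2 = y.2 ∨ H.Adj x.2 y.2)
  symm := by
    constructor
    rintro x y ⟨hne, h1, h2⟩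
    exact ⟨hne.symm, h1.imp Eq.symm G.adj_symm, h2.imp Eq.symm H.adj_symm⟩
  loopless := by constructor; rintro x ⟨hne, -, -⟩; exact hne rfl

/-- The closed geodesic interval between two vertices. -/
def interval {V : Type*} (G : SimpleGraph V) (u v : V) : Set V :=
  {w | G.dist u w + G.dist w v = G.dist u v}

/-- The geodetic closure of a set of vertices. -/
def intervalSet {V : Type*} (G : SimpleGraph V) (S : Set V) : Set V :=
  ⋃ u ∈ S, ⋃ v ∈ S, interval G u v

/-- A set is geodetic if its geodetic closure is the whole vertex set. -/
def IsGeodetic {V : Type*} (G : SimpleGraph V) (S : Set V) : Prop :=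
  intervalSet G S = Set.univ

/-- A set is a hull set if iterating the interval operator yields everything. -/
def IsHullSet {V : Type*} (G : SimpleGraph V) (S : Set V) : Prop :=
  ∃ r : ℕ, (intervalSet G)^[r] S = Set.univ

/-- The geodetic number. -/
noncomputable def geodeticNumber {V : Type*} (G : SimpleGraph V) : ℕ :=
  sInf {n : ℕ | ∃ S : Set V, S.ncard = n ∧ IsGeodetic G S}

/-- The hull number. -/
noncomputable def hullNumber {V : Type*} (G : SimpleGraph V) : ℕ :=
  sInf {n : ℕ | ∃ S : Set V, S.ncard = n ∧ IsHullSet G S}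

/-- A vertex is simplicial if its neighborhood induces a complete graph. -/
def IsSimplicial {V : Type*} (G : SimpleGraph V) (v : V) : Prop :=
  ∀ ⦃a b : V⦄, G.Adj v a → G.Adj v b → a ≠ b → G.Adj a b

/-! Distances in `G ⊠ H` are the maxima of the coordinate distances. Let `g` lie on a geodesic
from `g₁` to `g₂` and `h` on one from `h₁` to `h₂`, and suppose `d(g₁, g)` is the smallest of
`d(g₁, g), d(g, g₂), d(h₁, h), d(h, h₂)`. Then both distances from `(g, h)` to `(g₁, h₁)` and to
`(g₁, h₂)` are attained in the second coordinate, so `(g, h)` lies on a geodesic between these two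
vertices of `S₁ × S₂`; the other three cases are symmetric. -/

namespace SimpleGraph

variable {V W : Type*} {G : SimpleGraph V} {G' : SimpleGraph W} {f : V → W}

theorem Walk.edist_map_le_length (hf : ∀ ⦃x y⦄, G.Adj x y → G'.edist (f x) (f y) ≤ 1)
    {u v : V} (p : G.Walk u v) : G'.edist (f u) (f v) ≤ p.length := by
  induction p with
  | nil => simp
  | @cons x y z hxy p ih =>
    calc G'.edist (f x) (f z) ≤ G'.edist (f x) (f y) + G'.edist (f y) (f z) := G'.edist_triangle
      _ ≤ 1 + p.length := add_le_add (hf hxy) ih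
      _ = (p.cons hxy).length := by simp [add_comm]

theorem edist_map_le_edist (hf : ∀ ⦃x y⦄, G.Adj x y → G'.edist (f x) (f y) ≤ 1) (u v : V) :
    G'.edist (f u) (f v) ≤ G.edist u v := by
  by_cases hr : G.Reachable u v
  · obtain ⟨p, hp⟩ := hr.exists_walk_length_eq_edist
    exact hp ▸ p.edist_map_le_length hf
  · simp [edist_eq_top_of_not_reachable hr]

end SimpleGraph

theorem intervalSet_mono {V : Type*} (G : SimpleGraph V) {S T : Set V} (hST : S ⊆ T) :
    intervalSet G S ⊆ intervalSet G T :=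
  Set.biUnion_mono hST fun _ _ => Set.biUnion_mono hST fun _ _ => subset_rfl

section StrongProd

variable {α β : Type*} {G : SimpleGraph α} {H : SimpleGraph β}

theorem edist_strongProd_le_one_iff {x y : α × β} :
    (strongProd G H).edist x y ≤ 1 ↔ G.edist x.1 y.1 ≤ 1 ∧ H.edist x.2 y.2 ≤ 1 := by
  simp only [edist_le_one_iff_adj_or_eq, strongProd, Prod.ext_iff]
  tauto

theorem edist_strongProd_le_max_length {g g' : α} (p : G.Walk g g') {h h' : β} (q : H.Walk h h') :
    (strongProd G H).edist (g, h) (g', h') ≤ max p.length q.length := by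
  induction p generalizing h with
  | @nil g =>
    simpa using q.edist_map_le_length (f := fun b => (g, b)) fun _ _ hab =>
      edist_strongProd_le_one_iff.mpr ⟨by simp, (edist_eq_one_iff_adj.mpr hab).le⟩
  | @cons g₀ g₁ g₂ hg p ih =>
    cases q with
    | nil =>
      simpa using (p.cons hg).edist_map_le_length (f := fun a => (a, h')) fun _ _ hab =>
        edist_strongProd_le_one_iff.mpr ⟨(edist_eq_one_iff_adj.mpr hab).le, by simp⟩
    | @cons _ h₁ _ hh q =>
      have hstep : (strongProd G H).edist (g₀, h) (g₁, h₁) ≤ 1 :=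
        edist_strongProd_le_one_iff.mpr
          ⟨(edist_eq_one_iff_adj.mpr hg).le, (edist_eq_one_iff_adj.mpr hh).le⟩
      calc _ ≤ (strongProd G H).edist (g₀, h) (g₁, h₁)
            + (strongProd G H).edist (g₁, h₁) (g₂, h') := (strongProd G H).edist_triangle
        _ ≤ 1 + max p.length q.length := add_le_add hstep (ih q)
        _ = max (p.cons hg).length (q.cons hh).length := by
          rw [Walk.length_cons, Walk.length_cons, Nat.add_max_add_right]
          push_cast; ring

theorem edist_strongProd (x y : α × β) :
    (strongProd G H).edist x y = max (G.edist x.1 y.1) (H.edist x.2 y.2) := by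
  refine le_antisymm ?_ (max_le ?_ ?_)
  · by_cases hr : G.Reachable x.1 y.1 ∧ H.Reachable x.2 y.2
    · obtain ⟨p, hp⟩ := hr.1.exists_walk_length_eq_edist
      obtain ⟨q, hq⟩ := hr.2.exists_walk_length_eq_edist
      rw [← hp, ← hq, ← Nat.mono_cast.map_max]
      exact edist_strongProd_le_max_length p q
    · rw [not_and_or] at hr
      rcases hr with hr | hr <;> simp [edist_eq_top_of_not_reachable hr]
  · exact edist_map_le_edist (fun _ _ hxy =>
      (edist_strongProd_le_one_iff.mp (edist_eq_one_iff_adj.mpr hxy).le).1) x y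
  · exact edist_map_le_edist (fun _ _ hxy =>
      (edist_strongProd_le_one_iff.mp (edist_eq_one_iff_adj.mpr hxy).le).2) x y

theorem dist_strongProd {x y : α × β} (h₁ : G.Reachable x.1 y.1) (h₂ : H.Reachable x.2 y.2) :
    (strongProd G H).dist x y = max (G.dist x.1 y.1) (H.dist x.2 y.2) := by
  rw [SimpleGraph.dist, edist_strongProd, ← h₁.coe_dist_eq_edist, ← h₂.coe_dist_eq_edist,
    ← Nat.mono_cast.map_max, ENat.toNat_natCast]

theorem mk_mem_interval_strongProd_of_snd (hG : G.Connected) (hH : H.Connected) {g g' : α}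
    {h h₁ h₂ : β} (hh : h ∈ interval H h₁ h₂) (hle₁ : G.dist g' g ≤ H.dist h₁ h)
    (hle₂ : G.dist g' g ≤ H.dist h h₂) :
    (g, h) ∈ interval (strongProd G H) (g', h₁) (g', h₂) := by
  simp only [interval, Set.mem_ofPred_eq, dist_strongProd (hG _ _) (hH _ _)] at hh ⊢
  rw [G.dist_comm (u := g), G.dist_self]
  omega

theorem mk_mem_interval_strongProd_of_fst (hG : G.Connected) (hH : H.Connected) {g g₁ g₂ : α}
    {h h' : β} (hg : g ∈ interval G g₁ g₂) (hle₁ : H.dist h' h ≤ G.dist g₁ g)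
    (hle₂ : H.dist h' h ≤ G.dist g g₂) :
    (g, h) ∈ interval (strongProd G H) (g₁, h') (g₂, h') := by
  simp only [interval, Set.mem_ofPred_eq, dist_strongProd (hG _ _) (hH _ _)] at hg ⊢
  rw [H.dist_comm (u := h), H.dist_self]
  omega

theorem prod_interval_subset_intervalSet_strongProd (hG : G.Connected) (hH : H.Connected)
    (g₁ g₂ : α) (h₁ h₂ : β) :
    interval G g₁ g₂ ×ˢ interval H h₁ h₂ ⊆
      intervalSet (strongProd G H) ({g₁, g₂} ×ˢ {h₁, h₂}) := by
  rintro ⟨g, h⟩ ⟨hg, hh⟩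
  simp only [intervalSet, Set.mem_iUnion, exists_prop]
  have hcomm₁ := G.dist_comm (u := g) (v := g₂)
  have hcomm₂ := H.dist_comm (u := h) (v := h₂)
  rcases (by omega : (G.dist g₁ g ≤ H.dist h₁ h ∧ G.dist g₁ g ≤ H.dist h h₂) ∨
      (G.dist g g₂ ≤ H.dist h₁ h ∧ G.dist g g₂ ≤ H.dist h h₂) ∨
      (H.dist h₁ h ≤ G.dist g₁ g ∧ H.dist h₁ h ≤ G.dist g g₂) ∨
      (H.dist h h₂ ≤ G.dist g₁ g ∧ H.dist h h₂ ≤ G.dist g g₂)) with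
    ⟨hle₁, hle₂⟩ | ⟨hle₁, hle₂⟩ | ⟨hle₁, hle₂⟩ | ⟨hle₁, hle₂⟩
  · exact ⟨_, by simp, _, by simp, mk_mem_interval_strongProd_of_snd hG hH hh hle₁ hle₂⟩
  · exact ⟨_, by simp, _, by simp,
      mk_mem_interval_strongProd_of_snd (g' := g₂) hG hH hh (hcomm₁ ▸ hle₁) (hcomm₁ ▸ hle₂)⟩
  · exact ⟨_, by simp, _, by simp, mk_mem_interval_strongProd_of_fst hG hH hg hle₁ hle₂⟩
  · exact ⟨_, by simp, _, by simp,
      mk_mem_interval_strongProd_of_fst (h' := h₂) hG hH hg (hcomm₂ ▸ hle₁) (hcomm₂ ▸ hle₂)⟩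

theorem prod_intervalSet_subset_intervalSet_strongProd (hG : G.Connected) (hH : H.Connected)
    (S₁ : Set α) (S₂ : Set β) :
    intervalSet G S₁ ×ˢ intervalSet H S₂ ⊆ intervalSet (strongProd G H) (S₁ ×ˢ S₂) := by
  rintro ⟨g, h⟩ ⟨hg, hh⟩
  simp only [intervalSet, Set.mem_iUnion, exists_prop] at hg hh
  obtain ⟨g₁, hg₁, g₂, hg₂, hg⟩ := hg
  obtain ⟨h₁, hh₁, h₂, hh₂, hh⟩ := hh
  refine intervalSet_mono _ (Set.prod_mono ?_ ?_)
    (prod_interval_subset_intervalSet_strongProd hG hH g₁ g₂ h₁ h₂ ⟨hg, hh⟩)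
  · exact Set.pair_subset hg₁ hg₂
  · exact Set.pair_subset hh₁ hh₂

end StrongProd

theorem strongProd_geodetic_prod_general {α β : Type*}
    (G : SimpleGraph α) (H : SimpleGraph β) (hG : G.Connected) (hH : H.Connected)
    (S₁ : Set α) (S₂ : Set β)
    (h₁ : IsGeodetic G S₁) (h₂ : IsGeodetic H S₂) :
    IsGeodetic (strongProd G H) (S₁ ×ˢ S₂) := by
  have := prod_intervalSet_subset_intervalSet_strongProd hG hH S₁ S₂
  rwa [h₁, h₂, Set.univ_prod_univ, Set.univ_subset_iff] at this

theorem strongProd_geodetic_prod {α β : Type*} [Fintype α] [Fintype β]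
    (G : SimpleGraph α) (H : SimpleGraph β) (hG : G.Connected) (hH : H.Connected)
    (S₁ : Set α) (S₂ : Set β)
    (h₁ : IsGeodetic G S₁) (h₂ : IsGeodetic H S₂) :
    IsGeodetic (strongProd G H) (S₁ ×ˢ S₂) :=
  strongProd_geodetic_prod_general G H hG hH S₁ S₂ h₁ h₂
end

section
/- For any two nontrivial connected graphs G and H, the geodetic number of G ⊠ H is at least 4; that is, no set of at most 3 vertices of G ⊠ H is geodetic. -/
open SimpleGraph

/-! In `G ⊠ H` the distance is the maximum of the coordinate distances. Call a pair `u, v`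
`G`-dominant when `d_H(u.2, v.2) ≤ d_G(u.1, v.1)`. For such a pair every `w ∈ I(u, v)` has
`w.1 ∈ I_G(u.1, v.1)` and `d_H(u.2, w.2) ≤ d_G(u.1, w.1)`; in particular `u` is the only vertex of
`I(u, v)` with first coordinate `u.1`.

Among the three pairs of a triple `{u₁, u₂, u₃}` two share their dominant factor, and they share a
vertex; up to swapping the factors and relabelling, `u₁u₂` and `u₁u₃` are `G`-dominant. Then the
vertices `(u₁.1, y)` with `y ≠ u₁.2` can only be covered by `I(u₂, u₃)`, which forces `u₂u₃` to be
`G`-dominant too and `u₁.1 ∈ I_G(u₂.1, u₃.1)`. By symmetry each `uᵢ.1` lies between the other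
two, so the first coordinates coincide, hence (by dominance) the three vertices coincide, and a
single vertex is not geodetic. -/

section Geodetic

variable {V : Type*} {K : SimpleGraph V}

lemma interval_comm (u v : V) : interval K u v = interval K v u := by
  ext w
  simp only [interval, Set.mem_ofPred_eq]
  rw [K.dist_comm (u := u) (v := w), K.dist_comm (u := w) (v := v), K.dist_comm (u := u) (v := v),
    add_comm]

lemma left_mem_interval (u v : V) : u ∈ interval K u v := by
  simp [interval]

lemma right_mem_interval (u v : V) : v ∈ interval K u v := by
  simp [interval]

lemma interval_self (hK : K.Connected) (u : V) : interval K u u = {u} := by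
  ext w
  simp only [interval, Set.mem_ofPred_eq, dist_self, Nat.add_eq_zero_iff, Set.mem_singleton_iff,
    hK.dist_eq_zero_iff]
  exact ⟨fun h => h.1.symm, fun h => ⟨h.symm, h⟩⟩

lemma IsGeodetic.mem_interval_triple (hK : K.Connected) {a b c : V}
    (hS : IsGeodetic K {a, b, c}) (w : V) :
    w ∈ interval K a b ∨ w ∈ interval K a c ∨ w ∈ interval K b c := by
  have hw : w ∈ intervalSet K {a, b, c} := hS ▸ Set.mem_univ w
  simp only [intervalSet, Set.mem_iUnion, Set.mem_insert_iff, Set.mem_singleton_iff] at hw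
  obtain ⟨u, hu, v, hv, hw⟩ := hw
  have hw' : w ∈ interval K v u := interval_comm u v ▸ hw
  rcases hu with rfl | rfl | rfl <;> rcases hv with rfl | rfl | rfl <;>
    first
    | (rw [interval_self hK, Set.mem_singleton_iff] at hw
       subst hw
       simp [left_mem_interval, right_mem_interval])
    | tauto

lemma IsGeodetic.mono {S T : Set V} (hS : IsGeodetic K S) (hST : S ⊆ T) : IsGeodetic K T := by
  refine Set.eq_univ_of_univ_subset (hS ▸ ?_)
  simp only [intervalSet]
  exact Set.biUnion_mono hST fun u _ => Set.biUnion_mono hST fun _ _ => subset_rfl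

lemma isGeodetic_univ : IsGeodetic K Set.univ :=
  Set.eq_univ_of_forall fun w => Set.mem_biUnion (Set.mem_univ w)
    (Set.mem_biUnion (Set.mem_univ w) (left_mem_interval w w))

lemma not_isGeodetic_singleton [Nontrivial V] (hK : K.Connected) (u : V) :
    ¬ IsGeodetic K {u} := by
  intro h
  obtain ⟨w, hw⟩ := exists_ne u
  have : w ∈ intervalSet K {u} := h ▸ Set.mem_univ w
  simp [intervalSet, interval_self hK, hw] at this

lemma le_geodeticNumber {n : ℕ} (h : ∀ S : Set V, IsGeodetic K S → n ≤ S.ncard) :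
    n ≤ geodeticNumber K :=
  le_csInf ⟨_, Set.univ, rfl, isGeodetic_univ⟩ fun _ ⟨S, hS, hgeo⟩ => hS ▸ h S hgeo

end Geodetic

lemma Set.exists_subset_triple_of_ncard_le_three {V : Type*} [Finite V] [Nonempty V]
    {S : Set V} (hS : S.ncard ≤ 3) : ∃ a b c : V, S ⊆ {a, b, c} := by
  interval_cases h : S.ncard
  · obtain ⟨a⟩ := ‹Nonempty V›
    exact ⟨a, a, a, by simp [(Set.ncard_eq_zero).mp h]⟩
  · obtain ⟨a, rfl⟩ := Set.ncard_eq_one.mp h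
    exact ⟨a, a, a, by simp⟩
  · obtain ⟨a, b, -, rfl⟩ := Set.ncard_eq_two.mp h
    exact ⟨a, a, b, by simp⟩
  · obtain ⟨a, b, c, -, -, -, rfl⟩ := Set.ncard_eq_three.mp h
    exact ⟨a, b, c, subset_rfl⟩

lemma SimpleGraph.dist_le_of_adj_imp {V W : Type*} {K : SimpleGraph V} {K' : SimpleGraph W}
    (hK : K.Connected) (f : V → W) (hf : ∀ ⦃x y⦄, K.Adj x y → f x = f y ∨ K'.Adj (f x) (f y))
    (u v : V) : K'.dist (f u) (f v) ≤ K.dist u v := by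
  obtain ⟨p, hp⟩ := hK.exists_walk_length_eq_dist u v
  suffices ∀ {x y : V} (p : K.Walk x y), ∃ q : K'.Walk (f x) (f y), q.length ≤ p.length by
    obtain ⟨q, hq⟩ := this p
    exact hp ▸ (dist_le q).trans hq
  intro x y p
  induction p with
  | nil => exact ⟨.nil, le_rfl⟩
  | @cons x y z h p ih =>
    obtain ⟨q, hq⟩ := ih
    rcases hf h with e | e
    · exact ⟨q.copy e.symm rfl, by simp; omega⟩
    · exact ⟨.cons e q, by simp; omega⟩

section StrongProd

variable {α β : Type*} {G : SimpleGraph α} {H : SimpleGraph β} {u₁ u₂ u₃ : α × β}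

lemma strongProd_adj_of_adj_or_eq {a b : α} {c d : β} (hab : G.Adj a b ∨ a = b)
    (hcd : H.Adj c d ∨ c = d) (hne : (a, c) ≠ (b, d)) : (strongProd G H).Adj (a, c) (b, d) :=
  ⟨hne, hab.symm, hcd.symm⟩

lemma exists_walk_strongProd {a b : α} {c d : β} (p : G.Walk a b) (q : H.Walk c d) :
    ∃ r : (strongProd G H).Walk (a, c) (b, d), r.length = max p.length q.length := by
  induction p generalizing c with
  | nil =>
    induction q with
    | nil => exact ⟨.nil, rfl⟩
    | cons h q ih =>
      obtain ⟨r, hr⟩ := ih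
      refine ⟨.cons (strongProd_adj_of_adj_or_eq (.inr rfl) (.inl h) ?_) r, by simp [hr]⟩
      exact fun e => h.ne (congrArg Prod.snd e)
  | cons h p ih =>
    cases q with
    | nil =>
      obtain ⟨r, hr⟩ := ih .nil
      refine ⟨.cons (strongProd_adj_of_adj_or_eq (.inl h) (.inr rfl) ?_) r, by simp [hr]⟩
      exact fun e => h.ne (congrArg Prod.fst e)
    | cons h' q =>
      obtain ⟨r, hr⟩ := ih q
      refine ⟨.cons (strongProd_adj_of_adj_or_eq (.inl h) (.inl h') ?_) r, by simp [hr]⟩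
      exact fun e => h.ne (congrArg Prod.fst e)

lemma strongProd_connected (hG : G.Connected) (hH : H.Connected) :
    (strongProd G H).Connected := by
  have : Nonempty (α × β) := ⟨(hG.nonempty.some, hH.nonempty.some)⟩
  refine ⟨fun u v => ?_⟩
  obtain ⟨p⟩ := hG u.1 v.1
  obtain ⟨q⟩ := hH u.2 v.2
  obtain ⟨r, -⟩ := exists_walk_strongProd p q
  exact ⟨r⟩

lemma strongProd_dist (hG : G.Connected) (hH : H.Connected) (u v : α × β) :
    (strongProd G H).dist u v = max (G.dist u.1 v.1) (H.dist u.2 v.2) := by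
  apply le_antisymm
  · obtain ⟨p, hp⟩ := hG.exists_walk_length_eq_dist u.1 v.1
    obtain ⟨q, hq⟩ := hH.exists_walk_length_eq_dist u.2 v.2
    obtain ⟨r, hr⟩ := exists_walk_strongProd p q
    exact hp ▸ hq ▸ hr ▸ dist_le r
  · have hK := strongProd_connected hG hH
    exact max_le (dist_le_of_adj_imp hK Prod.fst (fun _ _ h => h.2.1) u v)
      (dist_le_of_adj_imp hK Prod.snd (fun _ _ h => h.2.2) u v)

lemma mem_interval_strongProd_swap (hG : G.Connected) (hH : H.Connected) {u v w : α × β} :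
    w.swap ∈ interval (strongProd H G) u.swap v.swap ↔ w ∈ interval (strongProd G H) u v := by
  simp only [interval, Set.mem_ofPred_eq, strongProd_dist hG hH, strongProd_dist hH hG,
    Prod.fst_swap, Prod.snd_swap, max_comm]

lemma IsGeodetic.strongProd_swap (hG : G.Connected) (hH : H.Connected) {S : Set (α × β)}
    (hS : IsGeodetic (strongProd G H) S) : IsGeodetic (strongProd H G) (Prod.swap '' S) := by
  refine Set.eq_univ_of_forall fun w => ?_
  have hw : w.swap ∈ intervalSet (strongProd G H) S := hS ▸ Set.mem_univ _
  simp only [intervalSet, Set.mem_iUnion] at hw ⊢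
  obtain ⟨u, hu, v, hv, hw⟩ := hw
  exact ⟨u.swap, Set.mem_image_of_mem _ hu, v.swap, Set.mem_image_of_mem _ hv,
    (mem_interval_strongProd_swap hG hH).2 hw⟩

lemma fst_mem_interval_of_mem_interval_strongProd (hG : G.Connected) (hH : H.Connected)
    {u v w : α × β} (huv : H.dist u.2 v.2 ≤ G.dist u.1 v.1)
    (hw : w ∈ interval (strongProd G H) u v) : w.1 ∈ interval G u.1 v.1 := by
  simp only [interval, Set.mem_ofPred_eq, strongProd_dist hG hH] at hw ⊢
  have := hG.dist_triangle (u := u.1) (v := w.1) (w := v.1)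
  omega

lemma eq_of_mem_interval_strongProd_of_fst_eq (hG : G.Connected) (hH : H.Connected)
    {u v w : α × β} (huv : H.dist u.2 v.2 ≤ G.dist u.1 v.1)
    (hw : w ∈ interval (strongProd G H) u v) (h : w.1 = u.1) : w = u := by
  simp only [interval, Set.mem_ofPred_eq, strongProd_dist hG hH, h, dist_self] at hw
  have : H.dist u.2 w.2 = 0 := by omega
  exact Prod.ext h ((hH.dist_eq_zero_iff.mp this).symm)

lemma eq_of_mem_interval_strongProd_of_snd_eq (hG : G.Connected) (hH : H.Connected)
    {u v w : α × β} (huv : G.dist u.1 v.1 ≤ H.dist u.2 v.2)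
    (hw : w ∈ interval (strongProd G H) u v) (h : w.2 = u.2) : w = u :=
  Prod.swap_injective <| eq_of_mem_interval_strongProd_of_fst_eq hH hG (v := v.swap) huv
    ((mem_interval_strongProd_swap hG hH).2 hw) h

lemma eq_of_dist_fst_eq_zero (hG : G.Connected) (hH : H.Connected) {u v : α × β}
    (huv : H.dist u.2 v.2 ≤ G.dist u.1 v.1) (h : G.dist u.1 v.1 = 0) : u = v :=
  Prod.ext (hG.dist_eq_zero_iff.mp h) (hH.dist_eq_zero_iff.mp (by omega))

lemma mk_mem_interval_of_isGeodetic_triple (hG : G.Connected) (hH : H.Connected)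
    (hS : IsGeodetic (strongProd G H) {u₁, u₂, u₃})
    (h₁₂ : H.dist u₁.2 u₂.2 ≤ G.dist u₁.1 u₂.1) (h₁₃ : H.dist u₁.2 u₃.2 ≤ G.dist u₁.1 u₃.1)
    {y : β} (hy : y ≠ u₁.2) : (u₁.1, y) ∈ interval (strongProd G H) u₂ u₃ := by
  have hne : (u₁.1, y) ≠ u₁ := fun e => hy (congrArg Prod.snd e)
  rcases hS.mem_interval_triple (strongProd_connected hG hH) (u₁.1, y) with h | h | h
  · exact absurd (eq_of_mem_interval_strongProd_of_fst_eq hG hH h₁₂ h rfl) hne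
  · exact absurd (eq_of_mem_interval_strongProd_of_fst_eq hG hH h₁₃ h rfl) hne
  · exact h

lemma dist_snd_le_dist_fst_of_isGeodetic_triple (hG : G.Connected) (hH : H.Connected)
    (hS : IsGeodetic (strongProd G H) {u₁, u₂, u₃})
    (h₁₂ : H.dist u₁.2 u₂.2 ≤ G.dist u₁.1 u₂.1) (h₁₃ : H.dist u₁.2 u₃.2 ≤ G.dist u₁.1 u₃.1) :
    H.dist u₂.2 u₃.2 ≤ G.dist u₂.1 u₃.1 := by
  by_contra! h₂₃
  -- If `uᵢ.2 ≠ u₁.2`, then `(u₁.1, uᵢ.2) ∈ I(u₂, u₃)` has the `H`-coordinate of `uᵢ`, so it is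
  -- `uᵢ`; thus `uᵢ.1 = u₁.1`, and `G`-dominance of `u₁uᵢ` gives `uᵢ = u₁`.
  have h₃₂ : G.dist u₃.1 u₂.1 ≤ H.dist u₃.2 u₂.2 := by
    rw [G.dist_comm, H.dist_comm]; exact h₂₃.le
  have snd_eq : ∀ {v : α × β}, H.dist u₁.2 v.2 ≤ G.dist u₁.1 v.1 → (u₁.1, v.2) = v →
      v.2 = u₁.2 := by
    intro v hv e
    rw [← eq_of_dist_fst_eq_zero hG hH hv (by rw [← e, dist_self])]
  have h₂ : u₂.2 = u₁.2 := by
    by_contra hy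
    have hw := mk_mem_interval_of_isGeodetic_triple hG hH hS h₁₂ h₁₃ hy
    exact hy (snd_eq h₁₂ (eq_of_mem_interval_strongProd_of_snd_eq hG hH h₂₃.le hw rfl))
  have h₃ : u₃.2 = u₁.2 := by
    by_contra hy
    have hw := mk_mem_interval_of_isGeodetic_triple hG hH hS h₁₂ h₁₃ hy
    rw [interval_comm] at hw
    exact hy (snd_eq h₁₃ (eq_of_mem_interval_strongProd_of_snd_eq hG hH h₃₂ hw rfl))
  simp [h₂, h₃] at h₂₃

lemma fst_mem_interval_of_isGeodetic_triple [Nontrivial β] (hG : G.Connected)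
    (hH : H.Connected) (hS : IsGeodetic (strongProd G H) {u₁, u₂, u₃})
    (h₁₂ : H.dist u₁.2 u₂.2 ≤ G.dist u₁.1 u₂.1) (h₁₃ : H.dist u₁.2 u₃.2 ≤ G.dist u₁.1 u₃.1) :
    u₁.1 ∈ interval G u₂.1 u₃.1 := by
  obtain ⟨y, hy⟩ := exists_ne u₁.2
  exact fst_mem_interval_of_mem_interval_strongProd hG hH (w := (u₁.1, y))
    (dist_snd_le_dist_fst_of_isGeodetic_triple hG hH hS h₁₂ h₁₃)
    (mk_mem_interval_of_isGeodetic_triple hG hH hS h₁₂ h₁₃ hy)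

lemma not_isGeodetic_triple_of_dist_snd_le_dist_fst [Nontrivial β] (hG : G.Connected)
    (hH : H.Connected) (h₁₂ : H.dist u₁.2 u₂.2 ≤ G.dist u₁.1 u₂.1)
    (h₁₃ : H.dist u₁.2 u₃.2 ≤ G.dist u₁.1 u₃.1) :
    ¬ IsGeodetic (strongProd G H) {u₁, u₂, u₃} := by
  intro hS
  have h₂₃ := dist_snd_le_dist_fst_of_isGeodetic_triple hG hH hS h₁₂ h₁₃
  have h₂₁ : H.dist u₂.2 u₁.2 ≤ G.dist u₂.1 u₁.1 := by rwa [G.dist_comm, H.dist_comm]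
  have h₃₁ : H.dist u₃.2 u₁.2 ≤ G.dist u₃.1 u₁.1 := by rwa [G.dist_comm, H.dist_comm]
  have hS₂ : IsGeodetic (strongProd G H) {u₂, u₁, u₃} := by rwa [Set.insert_comm]
  have hS₃ : IsGeodetic (strongProd G H) {u₃, u₁, u₂} := by
    rwa [Set.insert_comm, Set.pair_comm]
  have e₁ := fst_mem_interval_of_isGeodetic_triple hG hH hS h₁₂ h₁₃
  have e₂ := fst_mem_interval_of_isGeodetic_triple hG hH hS₂ h₂₁ h₂₃
  have e₃ := fst_mem_interval_of_isGeodetic_triple hG hH hS₃ h₃₁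
    (by rwa [G.dist_comm, H.dist_comm])
  simp only [interval, Set.mem_ofPred_eq] at e₁ e₂ e₃
  rw [G.dist_comm (u := u₂.1) (v := u₁.1)] at e₁
  rw [G.dist_comm (u := u₃.1) (v := u₂.1)] at e₃
  obtain rfl := eq_of_dist_fst_eq_zero hG hH h₁₂ (by omega)
  obtain rfl := eq_of_dist_fst_eq_zero hG hH h₁₃ (by omega)
  have := hG.nonempty
  exact not_isGeodetic_singleton (strongProd_connected hG hH) u₁ (by simpa using hS)

lemma not_isGeodetic_triple_of_dominance_iff [Nontrivial α] [Nontrivial β] (hG : G.Connected)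
    (hH : H.Connected)
    (h : H.dist u₁.2 u₂.2 ≤ G.dist u₁.1 u₂.1 ↔ H.dist u₁.2 u₃.2 ≤ G.dist u₁.1 u₃.1) :
    ¬ IsGeodetic (strongProd G H) {u₁, u₂, u₃} := by
  by_cases h₁₂ : H.dist u₁.2 u₂.2 ≤ G.dist u₁.1 u₂.1
  · exact not_isGeodetic_triple_of_dist_snd_le_dist_fst hG hH h₁₂ (h.mp h₁₂)
  · have h₁₃ := mt h.mpr h₁₂
    intro hS
    have hS' := hS.strongProd_swap hG hH
    simp only [Set.image_insert_eq, Set.image_singleton] at hS'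
    exact not_isGeodetic_triple_of_dist_snd_le_dist_fst hH hG (u₂ := u₂.swap) (u₃ := u₃.swap)
      (not_le.mp h₁₂).le (not_le.mp h₁₃).le hS'

lemma not_isGeodetic_strongProd_triple [Nontrivial α] [Nontrivial β] (hG : G.Connected)
    (hH : H.Connected) (u₁ u₂ u₃ : α × β) : ¬ IsGeodetic (strongProd G H) {u₁, u₂, u₃} := by
  have dominance_comm : ∀ u v : α × β,
      H.dist u.2 v.2 ≤ G.dist u.1 v.1 ↔ H.dist v.2 u.2 ≤ G.dist v.1 u.1 := fun u v => by
    rw [G.dist_comm, H.dist_comm]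
  by_cases h₁ : H.dist u₁.2 u₂.2 ≤ G.dist u₁.1 u₂.1 ↔ H.dist u₁.2 u₃.2 ≤ G.dist u₁.1 u₃.1
  · exact not_isGeodetic_triple_of_dominance_iff hG hH h₁
  by_cases h₂ : H.dist u₂.2 u₁.2 ≤ G.dist u₂.1 u₁.1 ↔ H.dist u₂.2 u₃.2 ≤ G.dist u₂.1 u₃.1
  · rw [Set.insert_comm]
    exact not_isGeodetic_triple_of_dominance_iff hG hH h₂
  have h₃ : H.dist u₃.2 u₁.2 ≤ G.dist u₃.1 u₁.1 ↔ H.dist u₃.2 u₂.2 ≤ G.dist u₃.1 u₂.1 := by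
    rw [dominance_comm u₃, dominance_comm u₃]
    rw [dominance_comm u₂] at h₂
    tauto
  rw [Set.pair_comm, Set.insert_comm]
  exact not_isGeodetic_triple_of_dominance_iff hG hH h₃

end StrongProd

theorem strongProd_geodeticNumber_ge_four {α β : Type*} [Fintype α] [Fintype β]
    [Nontrivial α] [Nontrivial β]
    (G : SimpleGraph α) (H : SimpleGraph β) (hG : G.Connected) (hH : H.Connected) :
    4 ≤ geodeticNumber (strongProd G H) ∧
      ∀ S : Set (α × β), S.ncard ≤ 3 → ¬ IsGeodetic (strongProd G H) S := by
  have small : ∀ S : Set (α × β), S.ncard ≤ 3 → ¬ IsGeodetic (strongProd G H) S := by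
    intro S hS hgeo
    obtain ⟨a, b, c, hsub⟩ := Set.exists_subset_triple_of_ncard_le_three hS
    exact not_isGeodetic_strongProd_triple hG hH a b c (hgeo.mono hsub)
  refine ⟨le_geodeticNumber fun S hgeo => ?_, small⟩
  by_contra! hS
  exact small S (by omega) hgeo
end

section
/- Let G be a connected graph with no simplicial vertices and H any connected graph. If S is a hull set of G and x is any vertex of H, then S × {x} is a hull set of G ⊠ H. Consequently, h(G ⊠ H) ≤ h(G). -/
open SimpleGraph

/-!
Distances in `G ⊠ H` are maxima of coordinate distances, so each slice `G × {x}` is an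
isometric copy of `G` and the hull of `S × {x}` contains the whole slice `V(G) × {x}`.
If `g` is not simplicial it has two neighbours `a, b` at distance `2`, and then `(g, y')`
lies on a geodesic between `(a, y)` and `(b, y)` whenever `y'` is adjacent to `y`. Hence a
full slice spreads to the neighbouring slices, and after `diam H` more rounds to everything.
-/

section Interval

variable {V W : Type*} {G : SimpleGraph V} {G' : SimpleGraph W}

theorem mem_intervalSet {S : Set V} {u v w : V} (hu : u ∈ S) (hv : v ∈ S)
    (hw : w ∈ interval G u v) : w ∈ intervalSet G S :=
  Set.mem_biUnion hu (Set.mem_biUnion hv hw)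

theorem intervalSet_monotone : Monotone (intervalSet G) := fun _ _ hST =>
  Set.biUnion_mono hST fun _ _ => Set.biUnion_mono hST fun _ _ => subset_rfl

theorem subset_intervalSet (S : Set V) : S ⊆ intervalSet G S := fun u hu =>
  mem_intervalSet hu hu (by simp [interval])

theorem image_intervalSet_subset {f : V → W} (hf : ∀ u v, G'.dist (f u) (f v) = G.dist u v)
    (S : Set V) : f '' intervalSet G S ⊆ intervalSet G' (f '' S) := by
  rintro _ ⟨w, hw, rfl⟩
  simp only [intervalSet, Set.mem_iUnion] at hw
  obtain ⟨u, hu, v, hv, hw⟩ := hw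
  refine mem_intervalSet (Set.mem_image_of_mem f hu) (Set.mem_image_of_mem f hv) ?_
  simpa only [interval, Set.mem_ofPred_eq, hf] using hw

theorem IsHullSet.range_subset_iterate_image {f : V → W}
    (hf : ∀ u v, G'.dist (f u) (f v) = G.dist u v) {S : Set V} (hS : IsHullSet G S) :
    ∃ r, Set.range f ⊆ (intervalSet G')^[r] (f '' S) := by
  obtain ⟨r, hr⟩ := hS
  refine ⟨r, ?_⟩
  have := intervalSet_monotone.le_iterate_comp_of_le (h := Set.image f)
    (fun T => image_intervalSet_subset hf T) r S
  simpa [hr, Set.image_univ] using this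

theorem hullNumber_le {S : Set V} (hS : IsHullSet G S) : hullNumber G ≤ S.ncard :=
  Nat.sInf_le ⟨S, rfl, hS⟩

theorem exists_isHullSet_ncard_eq_hullNumber (G : SimpleGraph V) :
    ∃ S : Set V, S.ncard = hullNumber G ∧ IsHullSet G S :=
  Nat.sInf_mem (s := {n | ∃ S : Set V, S.ncard = n ∧ IsHullSet G S})
    ⟨_, Set.univ, rfl, 0, rfl⟩

end Interval

section Distance

variable {V W : Type*} {G : SimpleGraph V} {H : SimpleGraph W}

theorem edist_le_length_of_adj_or_eq {f : V → W}
    (hf : ∀ ⦃a b⦄, G.Adj a b → f a = f b ∨ H.Adj (f a) (f b)) :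
    ∀ {u v : V} (p : G.Walk u v), H.edist (f u) (f v) ≤ p.length
  | _, _, .nil => by simp
  | u, v, .cons (v := w) huw p => by
    have hstep : H.edist (f u) (f w) ≤ 1 := edist_le_one_iff_adj_or_eq.mpr (hf huw).symm
    calc H.edist (f u) (f v) ≤ H.edist (f u) (f w) + H.edist (f w) (f v) := H.edist_triangle
      _ ≤ 1 + p.length := add_le_add hstep (edist_le_length_of_adj_or_eq hf p)
      _ = (p.cons huw).length := by push_cast [Walk.length_cons]; ring

theorem dist_le_dist_of_adj_or_eq {f : V → W}
    (hf : ∀ ⦃a b⦄, G.Adj a b → f a = f b ∨ H.Adj (f a) (f b)) {u v : V}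
    (huv : G.Reachable u v) : H.dist (f u) (f v) ≤ G.dist u v := by
  obtain ⟨p, hp⟩ := huv.exists_walk_length_eq_dist
  have hle := edist_le_length_of_adj_or_eq hf p
  have hreach := reachable_of_edist_ne_top (ne_top_of_le_ne_top (by simp) hle)
  rw [← hreach.coe_dist_eq_edist, hp] at hle
  exact_mod_cast hle

theorem exists_adj_adj_dist_eq_two {v : V} (hv : ¬ IsSimplicial G v) :
    ∃ a b, G.Adj v a ∧ G.Adj v b ∧ G.dist a b = 2 := by
  simp only [IsSimplicial, not_forall] at hv
  obtain ⟨a, b, hva, hvb, hab, hnadj⟩ := hv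
  refine ⟨a, b, hva, hvb, le_antisymm ?_ ?_⟩
  · simpa using dist_le ((Walk.nil.cons hvb).cons hva.symm)
  · exact (hva.symm.reachable.trans hvb.reachable).one_lt_dist_of_ne_of_not_adj hab hnadj

end Distance

namespace StrongProd

variable {α β : Type*} {G : SimpleGraph α} {H : SimpleGraph β}

theorem adj_of_adj_of_eq {g g' : α} (hg : G.Adj g g') (y : β) :
    (strongProd G H).Adj (g, y) (g', y) :=
  ⟨by simp [hg.ne], Or.inr hg, Or.inl rfl⟩

theorem adj_of_eq_of_adj (g : α) {y y' : β} (hy : H.Adj y y') :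
    (strongProd G H).Adj (g, y) (g, y') :=
  ⟨by simp [hy.ne], Or.inl rfl, Or.inr hy⟩

theorem adj_of_adj_of_adj {g g' : α} {y y' : β} (hg : G.Adj g g') (hy : H.Adj y y') :
    (strongProd G H).Adj (g, y) (g', y') :=
  ⟨by simp [hg.ne], Or.inr hg, Or.inr hy⟩

def zipWalk : ∀ {g g' : α} {h h' : β}, G.Walk g g' → H.Walk h h' →
    (strongProd G H).Walk (g, h) (g', h')
  | _, _, _, _, .nil, .nil => .nil
  | _, _, _, _, .nil, .cons b q => .cons (adj_of_eq_of_adj _ b) (zipWalk .nil q)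
  | _, _, _, _, .cons a p, .nil => .cons (adj_of_adj_of_eq a _) (zipWalk p .nil)
  | _, _, _, _, .cons a p, .cons b q => .cons (adj_of_adj_of_adj a b) (zipWalk p q)

theorem length_zipWalk : ∀ {g g' : α} {h h' : β} (p : G.Walk g g') (q : H.Walk h h'),
    (zipWalk p q).length = max p.length q.length
  | _, _, _, _, .nil, .nil => by simp [zipWalk]
  | _, _, _, _, .nil, .cons b q => by simp [zipWalk, length_zipWalk .nil q]
  | _, _, _, _, .cons a p, .nil => by simp [zipWalk, length_zipWalk p .nil]
  | _, _, _, _, .cons a p, .cons b q => by simp [zipWalk, length_zipWalk p q, Nat.succ_max_succ]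

theorem reachable (hG : G.Connected) (hH : H.Connected) (x y : α × β) :
    (strongProd G H).Reachable x y :=
  ⟨zipWalk (hG.preconnected x.1 y.1).some (hH.preconnected x.2 y.2).some⟩

theorem dist_eq (hG : G.Connected) (hH : H.Connected) (g g' : α) (h h' : β) :
    (strongProd G H).dist (g, h) (g', h') = max (G.dist g g') (H.dist h h') := by
  apply le_antisymm
  · obtain ⟨p, hp⟩ := hG.exists_walk_length_eq_dist g g'
    obtain ⟨q, hq⟩ := hH.exists_walk_length_eq_dist h h'
    simpa [length_zipWalk, hp, hq] using dist_le (zipWalk p q)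
  · have hreach := reachable hG hH (g, h) (g', h')
    exact max_le
      (dist_le_dist_of_adj_or_eq (G := strongProd G H) (f := Prod.fst) (fun _ _ h => h.2.1) hreach)
      (dist_le_dist_of_adj_or_eq (G := strongProd G H) (f := Prod.snd) (fun _ _ h => h.2.2) hreach)

theorem dist_mk_same_snd (hG : G.Connected) (hH : H.Connected) (y : β) (g g' : α) :
    (strongProd G H).dist (g, y) (g', y) = G.dist g g' := by
  simp [dist_eq hG hH]

theorem prod_singleton_subset_intervalSet_of_adj (hG : G.Connected) (hH : H.Connected)
    (hext : ∀ v : α, ¬ IsSimplicial G v) {T : Set (α × β)} {y y' : β}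
    (hT : Set.univ ×ˢ {y} ⊆ T) (hyy' : H.Adj y y') :
    Set.univ ×ˢ {y'} ⊆ intervalSet (strongProd G H) T := by
  rintro ⟨g, _⟩ ⟨-, rfl⟩
  obtain ⟨a, b, hga, hgb, hab⟩ := exists_adj_adj_dist_eq_two (hext g)
  refine mem_intervalSet (hT (Set.mk_mem_prod (Set.mem_univ a) rfl))
    (hT (Set.mk_mem_prod (Set.mem_univ b) rfl)) ?_
  simp only [interval, Set.mem_ofPred_eq, dist_eq hG hH, dist_eq_one_iff_adj.mpr hga.symm,
    dist_eq_one_iff_adj.mpr hgb, dist_eq_one_iff_adj.mpr hyy', dist_eq_one_iff_adj.mpr hyy'.symm,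
    hab, dist_self]
  rfl

theorem prod_singleton_subset_iterate (hG : G.Connected) (hH : H.Connected)
    (hext : ∀ v : α, ¬ IsSimplicial G v) :
    ∀ {y y' : β} (p : H.Walk y y') {T : Set (α × β)}, Set.univ ×ˢ {y} ⊆ T →
      Set.univ ×ˢ {y'} ⊆ (intervalSet (strongProd G H))^[p.length] T
  | _, _, .nil, _, hT => hT
  | _, _, .cons hyz p, _, hT =>
    prod_singleton_subset_iterate hG hH hext p
      (prod_singleton_subset_intervalSet_of_adj hG hH hext hT hyz)

theorem isHullSet_prod_singleton [Finite β] (hG : G.Connected) (hH : H.Connected)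
    (hext : ∀ v : α, ¬ IsSimplicial G v) {S : Set α} (hS : IsHullSet G S) (x : β) :
    IsHullSet (strongProd G H) (S ×ˢ {x}) := by
  obtain ⟨r, hr⟩ := hS.range_subset_iterate_image (dist_mk_same_snd hG hH x)
  rw [← Set.prod_singleton] at hr
  have hslice : Set.univ ×ˢ {x} ⊆ (intervalSet (strongProd G H))^[r] (S ×ˢ {x}) := by
    rintro ⟨g, _⟩ ⟨-, rfl⟩
    exact hr ⟨g, rfl⟩
  have : Nonempty β := hH.nonempty
  have hdiam : H.ediam ≠ ⊤ := connected_iff_ediam_ne_top.mp hH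
  refine ⟨H.diam + r, Set.eq_univ_of_forall fun ⟨g, y⟩ => ?_⟩
  obtain ⟨p, hp⟩ := hH.exists_walk_length_eq_dist x y
  have hmono := Function.monotone_iterate_of_id_le (f := intervalSet (strongProd G H))
    subset_intervalSet
  rw [Function.iterate_add_apply]
  exact hmono (hp ▸ dist_le_diam hdiam) _
    (prod_singleton_subset_iterate hG hH hext p hslice ⟨trivial, rfl⟩)

end StrongProd

theorem strongProd_hull_slice_general {α β : Type*} [Fintype β]
    (G : SimpleGraph α) (H : SimpleGraph β) (hG : G.Connected) (hH : H.Connected)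
    (hext : ∀ v : α, ¬ IsSimplicial G v) :
    (∀ (S : Set α) (x : β), IsHullSet G S →
        IsHullSet (strongProd G H) (S ×ˢ ({x} : Set β))) ∧
      hullNumber (strongProd G H) ≤ hullNumber G := by
  refine ⟨fun S x hS => StrongProd.isHullSet_prod_singleton hG hH hext hS x, ?_⟩
  obtain ⟨S, hS, hSHull⟩ := exists_isHullSet_ncard_eq_hullNumber G
  obtain ⟨x⟩ := hH.nonempty
  calc hullNumber (strongProd G H)
      ≤ (S ×ˢ ({x} : Set β)).ncard :=
        hullNumber_le (StrongProd.isHullSet_prod_singleton hG hH hext hSHull x)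
    _ = hullNumber G := by rw [Set.ncard_prod, Set.ncard_singleton, mul_one, hS]

theorem strongProd_hull_slice {α β : Type*} [Fintype α] [Fintype β]
    (G : SimpleGraph α) (H : SimpleGraph β) (hG : G.Connected) (hH : H.Connected)
    (hext : ∀ v : α, ¬ IsSimplicial G v) :
    (∀ (S : Set α) (x : β), IsHullSet G S →
        IsHullSet (strongProd G H) (S ×ˢ ({x} : Set β))) ∧
      hullNumber (strongProd G H) ≤ hullNumber G :=
  strongProd_hull_slice_general G H hG hH hext
end
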